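/- For the 2-random coordinate descent method with uniform pair selection on min{f(x) + h(x) : aᵀx = b}, the expected optimality measure satisfies min_{0 ≤ l ≤ k} E[(M_2(x^l, Γ))²] ≤ N (F(x⁰) − F*) / (k + 1), where M_2(x, Γ) = ‖d_{NΓ}(x)‖_Γ and F* is the optimal value. -/

import Mathlib

open scoped BigOperators RealInnerProductSpace
open Finset Filter

noncomputable section

/-- The ambient space `ℝ^n` with the Euclidean norm. -/
abbrev En (n : ℕ) := EuclideanSpace ℝ (Fin n)

/-- Projection onto block `i` of the block decomposition of `ℝ^n` given by the
block-index map `blk : Fin n → Fin N`; it realizes `U_i U_iᵀ y`. -/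
def blockProj {n N : ℕ} (blk : Fin n → Fin N) (i : Fin N) (y : En n) : En n :=
  WithLp.toLp 2 (fun j => if blk j = i then y j else 0)

/-- The squared block norm `‖x‖_L² = ∑ i, L i ‖x_i‖²`. -/
def blockNormSq {n N : ℕ} (blk : Fin n → Fin N) (L : Fin N → ℝ) (x : En n) : ℝ :=
  ∑ i, L i * ‖blockProj blk i x‖ ^ 2

/-!
Fix `x`, let `d = d_{NΓ}(x)` and write `d_i` for its blocks. Since `aᵀd = 0`, the numbers
`c_i = aᵀd_i` sum to zero, so there are row-stochastic weights `τ` with zero diagonal and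
`τ_ij c_i + τ_ji c_j = 0`; thus `τ_ij d_i + τ_ji d_j` is a feasible direction on the pair
`(i, j)`. Comparing the pair step with it (descent lemma for `f`, convexity of the separable `h`
along blocks) and summing over the `P = N(N-1)/2` pairs gives
`∑_{i<j} F(x + d_ij) ≤ P F(x) + [⟨∇f(x), d⟩ + h(x + d) - h(x) + (N/2)‖d‖_Γ²]`.
Comparing `d` with `((N-1)/N) d` in its own minimisation bounds the bracket by
`-((N-1)/2)‖d‖_Γ² = -(P/N)‖d‖_Γ²`, so one step decreases `E F` by at least `E‖d_{NΓ}‖_Γ²/N`.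
Telescoping over `k + 1` steps against `F ≥ F*` and taking the smallest term gives the rate.
-/

lemma le_add_inner_add_of_inner_gradient_sub_le {E : Type*} [NormedAddCommGroup E]
    [InnerProductSpace ℝ E] [CompleteSpace E] {f : E → ℝ} {g : E → E}
    (hg : ∀ x, HasGradientAt f (g x) x)
    (x s : E) (C : ℝ) (hC : ∀ t, 0 < t → ⟪g (x + t • s) - g x, s⟫ ≤ C * t) :
    f (x + s) ≤ f x + ⟪g x, s⟫ + C / 2 := by
  set φ : ℝ → ℝ := fun t => f (x + t • s) - t * ⟪g x, s⟫ - C / 2 * t ^ 2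
  have hφ : ∀ t, HasDerivAt φ (⟪g (x + t • s) - g x, s⟫ - C * t) t := by
    intro t
    have hline : HasDerivAt (fun t : ℝ => x + t • s) s t := by
      simpa using ((hasDerivAt_id t).smul_const s).const_add x
    have hf := ((hg (x + t • s)).hasFDerivAt.comp_hasDerivAt t hline)
    simp only [InnerProductSpace.toDual_apply_apply] at hf
    refine ((hf.sub (hasDerivAt_mul_const _)).sub
      ((hasDerivAt_pow 2 t).const_mul (C / 2))).congr_deriv ?_
    rw [inner_sub_left]; ring
  have hanti : AntitoneOn φ (Set.Icc 0 1) := by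
    refine antitoneOn_of_deriv_nonpos (convex_Icc 0 1)
      (continuous_iff_continuousAt.2 fun t => (hφ t).continuousAt).continuousOn ?_ ?_
    · exact fun t _ => (hφ t).differentiableAt.differentiableWithinAt
    · intro t ht
      rw [interior_Icc] at ht
      rw [(hφ t).deriv]
      linarith [hC t ht.1]
  have h01 : φ 1 ≤ φ 0 := hanti (by simp) (by simp) zero_le_one
  norm_num [φ] at h01
  linarith

lemma sum_lt_pairs_add_swap {ι M : Type*} [Fintype ι] [LinearOrder ι] [AddCommMonoid M]
    (B : ι → ι → M) :
    ∑ p : {p : ι × ι // p.1 < p.2}, (B p.1.1 p.1.2 + B p.1.2 p.1.1) =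
      ∑ p ∈ univ.offDiag, B p.1 p.2 := by
  have hlt : ∀ p : ι × ι, p ∈ univ.filter (fun p : ι × ι => p.1 < p.2) ↔ p.1 < p.2 := by simp
  rw [Finset.sum_add_distrib, ← Finset.sum_subtype _ hlt (fun p => B p.1 p.2),
    ← Finset.sum_subtype _ hlt (fun p => B p.2 p.1),
    ← Finset.sum_filter_add_sum_filter_not univ.offDiag (fun p => p.1 < p.2)]
  congr 1
  · congr 1
    ext p
    simpa using fun h => h.ne
  · refine Finset.sum_equiv (Equiv.prodComm ι ι) (fun p => ?_) (fun _ _ => rfl)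
    simp only [mem_filter, mem_univ, true_and, Equiv.prodComm_apply, Prod.fst_swap,
      Prod.snd_swap, mem_offDiag]
    exact ⟨fun h => ⟨h.ne', not_lt.2 h.le⟩, fun h => lt_of_le_of_ne (not_lt.1 h.2) h.1.symm⟩

lemma card_lt_pairs_mul_two {ι : Type*} [Fintype ι] [LinearOrder ι] :
    (Fintype.card {p : ι × ι // p.1 < p.2} : ℝ) * 2 =
      Fintype.card ι * (Fintype.card ι - 1) := by
  have h := sum_lt_pairs_add_swap (fun _ _ : ι => (1 : ℝ))
  simp only [sum_const, card_univ, offDiag_card, nsmul_eq_mul, mul_one] at h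
  rw [Nat.cast_sub (Nat.le_mul_self _)] at h
  push_cast at h
  linarith

lemma exists_balanced_stochastic_weights {ι : Type*} [Fintype ι] [DecidableEq ι]
    (hι : 2 ≤ Fintype.card ι) (c : ι → ℝ) (hc : ∑ i, c i = 0) :
    ∃ τ : ι → ι → ℝ, (∀ i j, 0 ≤ τ i j) ∧ (∀ i, τ i i = 0) ∧ (∀ i, ∑ j, τ i j = 1) ∧
      ∀ i j, τ i j * c i + τ j i * c j = 0 := by
  set S := ∑ i, (c i)⁺
  have hneg : ∑ i, (c i)⁻ = S := by
    have : ∑ i, ((c i)⁺ - (c i)⁻) = 0 := by simpa only [posPart_sub_negPart] using hc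
    rw [Finset.sum_sub_distrib] at this
    linarith
  have hS : ∀ i, c i ≠ 0 → 0 < S := by
    intro i hi
    rcases hi.lt_or_gt with hi | hi
    · have := Finset.single_le_sum (fun j _ => negPart_nonneg (c j)) (mem_univ i)
      rw [hneg, negPart_eq_neg.2 hi.le] at this
      linarith
    · have := Finset.single_le_sum (fun j _ => posPart_nonneg (c j)) (mem_univ i)
      rw [posPart_eq_self.2 hi.le] at this
      linarith
  -- An index with `c i > 0` spreads its unit weight over the negative entries in proportion
  -- to `(c j)⁻`, and symmetrically; then `τ i j * c i = ((c i)⁺ (c j)⁻ - (c i)⁻ (c j)⁺) / S`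
  -- is antisymmetric. Rows with `c i = 0` are uniform off the diagonal.
  set τ : ι → ι → ℝ := fun i j =>
    if c i = 0 then (if i = j then 0 else ((Fintype.card ι : ℝ) - 1)⁻¹)
    else if 0 < c i then (c j)⁻ / S else (c j)⁺ / S
  have hcard : (1 : ℝ) < Fintype.card ι := by exact_mod_cast hι
  have hflow : ∀ i j, τ i j * c i = ((c i)⁺ * (c j)⁻ - (c i)⁻ * (c j)⁺) / S := by
    intro i j
    rcases lt_trichotomy (c i) 0 with hi | hi | hi
    · simp [τ, hi.ne, hi.not_gt, posPart_eq_zero.2 hi.le, negPart_eq_neg.2 hi.le]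
      ring
    · simp [τ, hi]
    · simp [τ, hi.ne', hi, posPart_eq_self.2 hi.le, negPart_eq_zero.2 hi.le]
      ring
  refine ⟨τ, fun i j => ?_, fun i => ?_, fun i => ?_, fun i j => ?_⟩
  · simp only [τ]
    split_ifs <;> first | rfl | (apply inv_nonneg.2; linarith) | positivity
  · rcases lt_trichotomy (c i) 0 with hi | hi | hi
    · simp [τ, hi.ne, hi.not_gt, posPart_eq_zero.2 hi.le]
    · simp [τ, hi]
    · simp [τ, hi.ne', hi, negPart_eq_zero.2 hi.le]
  · rcases lt_trichotomy (c i) 0 with hi | hi | hi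
    · simp only [τ, hi.ne, hi.not_gt, if_false]
      rw [← Finset.sum_div, div_self (hS i hi.ne).ne']
    · simp only [τ, hi, if_true]
      rw [Finset.sum_ite, Finset.sum_const_zero, zero_add, Finset.sum_const, Finset.filter_ne,
        card_erase_of_mem (mem_univ i), card_univ, nsmul_eq_mul, Nat.cast_sub (by omega)]
      push_cast
      exact mul_inv_cancel₀ (by linarith)
    · simp only [τ, hi.ne', hi, if_false, if_true]
      rw [← Finset.sum_div, hneg, div_self (hS i hi.ne').ne']
  · rw [hflow, hflow, ← add_div]
    ring

lemma sum_mul_add_mul_sq_mul_le {ι : Type*} [Fintype ι] {τ L : ι → ℝ} {A n : ℝ}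
    (hτ0 : ∀ j, 0 ≤ τ j) (hτ : ∑ j, τ j = 1) (hL : ∀ j, 0 ≤ L j) (hn : 0 ≤ n) :
    ∑ j, (τ j * A + L j / 2 * (τ j ^ 2 * n)) ≤ A + (∑ j, L j) / 2 * n := by
  have hsq : ∀ j, L j / 2 * (τ j ^ 2 * n) ≤ L j / 2 * n := fun j =>
    mul_le_mul_of_nonneg_left (mul_le_of_le_one_left hn (pow_le_one₀ (hτ0 j)
      (hτ ▸ Finset.single_le_sum (fun k _ => hτ0 k) (mem_univ j)))) (by linarith [hL j])
  rw [Finset.sum_add_distrib, ← Finset.sum_mul, hτ, one_mul, Finset.sum_div, Finset.sum_mul]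
  linarith [Finset.sum_le_sum fun j (_ : j ∈ univ) => hsq j]

lemma expect_fin_succ {α M : Type*} [Fintype α] [AddCommMonoid M] [Module ℚ≥0 M] (k : ℕ)
    (φ : (Fin (k + 1) → α) → M) :
    𝔼 w, φ w = 𝔼 v : Fin k → α, 𝔼 a : α, φ (Fin.snoc v a) := by
  rw [← Fintype.expect_equiv (Fin.snocEquiv fun _ => α) (fun z => φ (Fin.snoc z.2 z.1)) φ
    (fun _ => rfl), ← univ_product_univ,
    Finset.expect_product' univ univ fun a v => φ (Fin.snoc v a), Finset.expect_comm]

lemma exists_le_div_of_le_mul_sub_succ {T U : ℕ → ℝ} {c m : ℝ} (hc : 0 ≤ c)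
    (hU : ∀ l, U l ≤ c * (T l - T (l + 1))) (hT : ∀ l, m ≤ T l) (k : ℕ) :
    ∃ l ≤ k, U l ≤ c * (T 0 - m) / (k + 1) := by
  have hsum : ∑ l ∈ range (k + 1), U l ≤ ∑ _l ∈ range (k + 1), c * (T 0 - m) / (k + 1) := by
    calc ∑ l ∈ range (k + 1), U l ≤ ∑ l ∈ range (k + 1), c * (T l - T (l + 1)) :=
          Finset.sum_le_sum fun l _ => hU l
      _ = c * (T 0 - T (k + 1)) := by rw [← Finset.mul_sum, Finset.sum_range_sub']
      _ ≤ c * (T 0 - m) := by gcongr; linarith [hT (k + 1)]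
      _ = _ := by rw [Finset.sum_const, card_range, nsmul_eq_mul]; field_simp; push_cast; ring
  obtain ⟨l, hl, hUl⟩ := Finset.exists_le_of_sum_le nonempty_range_add_one hsum
  exact ⟨l, Nat.lt_succ_iff.1 (mem_range.1 hl), hUl⟩

lemma exists_expect_le_of_expect_step_le {α E : Type*} [Fintype α] [Nonempty α]
    (X : (k : ℕ) → (Fin k → α) → E) (step : E → α → E)
    (hX : ∀ k (w : Fin (k + 1) → α),
      X (k + 1) w = step (X k (fun t => w t.castSucc)) (w (Fin.last k)))
    (Φ Ψ : E → ℝ) {c m : ℝ} (hc : 0 ≤ c) (hm : ∀ k w, m ≤ Φ (X k w))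
    (hstep : ∀ x, Ψ x ≤ c * (Φ x - 𝔼 a, Φ (step x a))) (k : ℕ) :
    ∃ l ≤ k, 𝔼 w, Ψ (X l w) ≤ c * (𝔼 w, Φ (X 0 w) - m) / (k + 1) := by
  refine exists_le_div_of_le_mul_sub_succ hc (fun l => ?_)
    (fun l => Finset.le_expect univ_nonempty fun w _ => hm l w) k
  rw [expect_fin_succ l (fun w => Φ (X (l + 1) w))]
  simp only [hX, Fin.snoc_castSucc, Fin.snoc_last]
  rw [← Finset.expect_sub_distrib, Finset.mul_expect]
  exact Finset.expect_le_expect fun w _ => hstep (X l w)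

section BlockDecomposition

variable {n N : ℕ} (blk : Fin n → Fin N)

def blockScale (θ : Fin N → ℝ) (y : En n) : En n :=
  WithLp.toLp 2 (fun l => θ (blk l) * y l)

@[simp]
lemma blockProj_apply (i : Fin N) (y : En n) (l : Fin n) :
    blockProj blk i y l = if blk l = i then y l else 0 := rfl

@[simp]
lemma blockScale_apply (θ : Fin N → ℝ) (y : En n) (l : Fin n) :
    blockScale blk θ y l = θ (blk l) * y l := rfl

lemma sum_blockProj (y : En n) : ∑ i, blockProj blk i y = y := by
  ext l
  simp [WithLp.ofLp_sum]

lemma inner_eq_sum_inner_blockProj (u v : En n) :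
    ⟪u, v⟫ = ∑ i, ⟪u, blockProj blk i v⟫ := by
  rw [← inner_sum, sum_blockProj]

lemma norm_sq_eq_sum_norm_blockProj_sq (y : En n) :
    ‖y‖ ^ 2 = ∑ i, ‖blockProj blk i y‖ ^ 2 := by
  simp only [EuclideanSpace.norm_sq_eq, blockProj_apply, apply_ite, Real.norm_eq_abs, sq_abs]
  rw [Finset.sum_comm]
  simp

lemma blockProj_blockScale (θ : Fin N → ℝ) (i : Fin N) (y : En n) :
    blockProj blk i (blockScale blk θ y) = θ i • blockProj blk i y := by
  ext l
  by_cases hl : blk l = i <;> simp [hl]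

lemma blockScale_const (β : ℝ) (y : En n) : blockScale blk (fun _ => β) y = β • y := rfl

lemma inner_blockScale (θ : Fin N → ℝ) (u y : En n) :
    ⟪u, blockScale blk θ y⟫ = ∑ i, θ i * ⟪u, blockProj blk i y⟫ := by
  rw [inner_eq_sum_inner_blockProj blk]
  simp only [blockProj_blockScale, inner_smul_right]

lemma norm_blockProj_blockScale_sq (θ : Fin N → ℝ) (i : Fin N) (y : En n) :
    ‖blockProj blk i (blockScale blk θ y)‖ ^ 2 = θ i ^ 2 * ‖blockProj blk i y‖ ^ 2 := by
  rw [blockProj_blockScale, norm_smul, mul_pow, Real.norm_eq_abs, sq_abs]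

lemma blockNormSq_blockScale (Γ θ : Fin N → ℝ) (y : En n) :
    blockNormSq blk Γ (blockScale blk θ y) =
      ∑ i, Γ i * (θ i ^ 2 * ‖blockProj blk i y‖ ^ 2) := by
  simp only [blockNormSq, norm_blockProj_blockScale_sq]

lemma norm_blockScale_sq (θ : Fin N → ℝ) (y : En n) :
    ‖blockScale blk θ y‖ ^ 2 = ∑ i, θ i ^ 2 * ‖blockProj blk i y‖ ^ 2 := by
  rw [norm_sq_eq_sum_norm_blockProj_sq blk]
  simp only [norm_blockProj_blockScale_sq]

lemma inner_eq_inner_blockProj_add_of_support {i j : Fin N} (hij : i ≠ j) (v s : En n)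
    (hs : ∀ l, blk l ≠ i → blk l ≠ j → s l = 0) :
    ⟪v, s⟫ = ⟪blockProj blk i v + blockProj blk j v, s⟫ := by
  simp only [PiLp.inner_apply, RCLike.inner_apply, conj_trivial, PiLp.add_apply, blockProj_apply]
  refine Finset.sum_congr rfl fun l _ => ?_
  by_cases hi : blk l = i
  · simp [hi, hij]
  · by_cases hj : blk l = j
    · simp [hj, Ne.symm hij]
    · simp [hi, hj, hs l hi hj]

def blockModelChange (u : En n) (h : En n → ℝ) (x d : En n) (i : Fin N) : ℝ :=
  ⟪u, blockProj blk i d⟫ + (h (x + blockProj blk i d) - h x)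

end BlockDecomposition

section Separable

variable {n N : ℕ} (blk : Fin n → Fin N) {h : En n → ℝ} {Hc : Fin n → ℝ → ℝ}

lemma sub_eq_sum_of_separable (hsep : ∀ x : En n, h x = ∑ l, Hc l (x l)) (x d : En n)
    (i : Fin N) : h (x + blockProj blk i d) - h x =
      ∑ l, if blk l = i then Hc l (x l + d l) - Hc l (x l) else 0 := by
  rw [hsep, hsep, ← Finset.sum_sub_distrib]
  refine Finset.sum_congr rfl fun l _ => ?_
  by_cases hl : blk l = i <;> simp [hl]

lemma sum_sub_blockProj_of_separable (hsep : ∀ x : En n, h x = ∑ l, Hc l (x l))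
    (x d : En n) : ∑ i, (h (x + blockProj blk i d) - h x) = h (x + d) - h x := by
  simp only [sub_eq_sum_of_separable blk hsep]
  rw [Finset.sum_comm, hsep, hsep, ← Finset.sum_sub_distrib]
  simp

lemma le_add_sum_of_separable_convex (hHconv : ∀ l, ConvexOn ℝ Set.univ (Hc l))
    (hsep : ∀ x : En n, h x = ∑ l, Hc l (x l)) (x d : En n) {θ : Fin N → ℝ}
    (hθ0 : ∀ i, 0 ≤ θ i) (hθ1 : ∀ i, θ i ≤ 1) :
    h (x + blockScale blk θ d) ≤ h x + ∑ i, θ i * (h (x + blockProj blk i d) - h x) := by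
  have hcoord : ∀ l, Hc l (x l + θ (blk l) * d l) ≤
      Hc l (x l) + θ (blk l) * (Hc l (x l + d l) - Hc l (x l)) := by
    intro l
    have hconv := (hHconv l).2 (Set.mem_univ (x l)) (Set.mem_univ (x l + d l))
      (sub_nonneg.2 (hθ1 (blk l))) (hθ0 (blk l)) (by ring)
    simp only [smul_eq_mul] at hconv
    calc Hc l (x l + θ (blk l) * d l)
        = Hc l ((1 - θ (blk l)) * x l + θ (blk l) * (x l + d l)) := by ring_nf
      _ ≤ _ := hconv
      _ = _ := by ring
  simp only [sub_eq_sum_of_separable blk hsep, Finset.mul_sum, mul_ite, mul_zero]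
  rw [Finset.sum_comm, hsep, hsep, ← Finset.sum_add_distrib]
  refine Finset.sum_le_sum fun l _ => ?_
  simpa using hcoord l

end Separable

section StepBound

variable {n N : ℕ} {blk : Fin n → Fin N} {f h : En n → ℝ} {g : En n → En n}
  {Hc : Fin n → ℝ → ℝ}

lemma sum_blockModelChange (hsep : ∀ x : En n, h x = ∑ l, Hc l (x l)) (u x d : En n) :
    ∑ i, blockModelChange blk u h x d i = ⟪u, d⟫ + (h (x + d) - h x) := by
  simp only [blockModelChange]
  rw [Finset.sum_add_distrib, sum_sub_blockProj_of_separable blk hsep,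
    ← inner_eq_sum_inner_blockProj]

lemma inner_blockScale_add_le (hHconv : ∀ l, ConvexOn ℝ Set.univ (Hc l))
    (hsep : ∀ x : En n, h x = ∑ l, Hc l (x l)) (u x d : En n) {θ : Fin N → ℝ}
    (hθ0 : ∀ i, 0 ≤ θ i) (hθ1 : ∀ i, θ i ≤ 1) :
    ⟪u, blockScale blk θ d⟫ + h (x + blockScale blk θ d) ≤
      h x + ∑ i, θ i * blockModelChange blk u h x d i := by
  have := le_add_sum_of_separable_convex blk hHconv hsep x d hθ0 hθ1
  simp only [blockModelChange, mul_add, Finset.sum_add_distrib, inner_blockScale]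
  linarith

lemma le_add_inner_add_of_pair_lipschitz {L : Fin N → Fin N → ℝ}
    (hg : ∀ x, HasGradientAt f (g x) x)
    (hlip : ∀ (i j : Fin N), i ≠ j → ∀ (y s : En n),
      (∀ l, blk l ≠ i → blk l ≠ j → s l = 0) →
      ‖(blockProj blk i (g (y + s)) + blockProj blk j (g (y + s))) -
        (blockProj blk i (g y) + blockProj blk j (g y))‖ ≤ L i j * ‖s‖)
    {i j : Fin N} (hij : i ≠ j) (x s : En n) (hs : ∀ l, blk l ≠ i → blk l ≠ j → s l = 0) :
    f (x + s) ≤ f x + ⟪g x, s⟫ + L i j / 2 * ‖s‖ ^ 2 := by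
  have hC : ∀ t : ℝ, 0 < t → ⟪g (x + t • s) - g x, s⟫ ≤ L i j * ‖s‖ ^ 2 * t := by
    intro t ht
    have hts : ∀ l, blk l ≠ i → blk l ≠ j → (t • s) l = 0 := fun l hi hj => by
      simp [hs l hi hj]
    rw [inner_sub_left, inner_eq_inner_blockProj_add_of_support blk hij (g (x + t • s)) s hs,
      inner_eq_inner_blockProj_add_of_support blk hij (g x) s hs, ← inner_sub_left]
    calc _ ≤ ‖(blockProj blk i (g (x + t • s)) + blockProj blk j (g (x + t • s))) -
            (blockProj blk i (g x) + blockProj blk j (g x))‖ * ‖s‖ := real_inner_le_norm _ _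
      _ ≤ L i j * ‖t • s‖ * ‖s‖ := by gcongr; exact hlip i j hij x (t • s) hts
      _ = L i j * ‖s‖ ^ 2 * t := by rw [norm_smul, Real.norm_of_nonneg ht.le]; ring
  have := le_add_inner_add_of_inner_gradient_sub_le hg x s _ hC
  linarith

lemma add_le_of_pair_minimizer {L : Fin N → Fin N → ℝ} (hg : ∀ x, HasGradientAt f (g x) x)
    (hlip : ∀ (i j : Fin N), i ≠ j → ∀ (y s : En n),
      (∀ l, blk l ≠ i → blk l ≠ j → s l = 0) →
      ‖(blockProj blk i (g (y + s)) + blockProj blk j (g (y + s))) -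
        (blockProj blk i (g y) + blockProj blk j (g y))‖ ≤ L i j * ‖s‖)
    (hHconv : ∀ l, ConvexOn ℝ Set.univ (Hc l)) (hsep : ∀ x : En n, h x = ∑ l, Hc l (x l))
    {a x δ : En n} {i j : Fin N} (hij : i ≠ j)
    (hδsupp : ∀ l, blk l ≠ i → blk l ≠ j → δ l = 0)
    (hδmin : ∀ s : En n, (∀ l, blk l ≠ i → blk l ≠ j → s l = 0) → ⟪a, s⟫ = 0 →
      f x + ⟪g x, δ⟫ + L i j / 2 * ‖δ‖ ^ 2 + h (x + δ) ≤
      f x + ⟪g x, s⟫ + L i j / 2 * ‖s‖ ^ 2 + h (x + s))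
    (d : En n) {u v : ℝ} (hu0 : 0 ≤ u) (hu1 : u ≤ 1) (hv0 : 0 ≤ v) (hv1 : v ≤ 1)
    (hbal : u * ⟪a, blockProj blk i d⟫ + v * ⟪a, blockProj blk j d⟫ = 0) :
    f (x + δ) + h (x + δ) ≤ f x + h x +
      (u * blockModelChange blk (g x) h x d i + v * blockModelChange blk (g x) h x d j) +
      L i j / 2 * (u ^ 2 * ‖blockProj blk i d‖ ^ 2 + v ^ 2 * ‖blockProj blk j d‖ ^ 2) := by
  classical
  set θ : Fin N → ℝ := fun k => if k = i then u else if k = j then v else 0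
  have hθ : ∀ (φ : ℝ → ℝ) (X : Fin N → ℝ), φ 0 = 0 →
      ∑ k, φ (θ k) * X k = φ u * X i + φ v * X j := by
    intro φ X hφ
    rw [Finset.sum_eq_add_of_mem i j (mem_univ i) (mem_univ j) hij
      (fun k _ hk => by simp [θ, hk.1, hk.2, hφ])]
    simp [θ, hij.symm]
  have hlin : ∀ X : Fin N → ℝ, ∑ k, θ k * X k = u * X i + v * X j := fun X => hθ id X rfl
  have hθ0 : ∀ k, 0 ≤ θ k := fun k => by
    simp only [θ]; split_ifs <;> first | assumption | exact le_rfl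
  have hθ1 : ∀ k, θ k ≤ 1 := fun k => by simp only [θ]; split_ifs <;> linarith
  have hsupp : ∀ l, blk l ≠ i → blk l ≠ j → blockScale blk θ d l = 0 := fun l hi hj => by
    simp [θ, hi, hj]
  have hfeas : ⟪a, blockScale blk θ d⟫ = 0 := by
    rw [inner_blockScale, hlin, hbal]
  have hnorm : ‖blockScale blk θ d‖ ^ 2 =
      u ^ 2 * ‖blockProj blk i d‖ ^ 2 + v ^ 2 * ‖blockProj blk j d‖ ^ 2 := by
    rw [norm_blockScale_sq, hθ (· ^ 2) _ (zero_pow two_ne_zero)]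
  have hmodel := inner_blockScale_add_le (blk := blk) hHconv hsep (g x) x d hθ0 hθ1
  rw [hlin] at hmodel
  have hdesc := le_add_inner_add_of_pair_lipschitz hg hlip hij x δ hδsupp
  have hmin := hδmin _ hsupp hfeas
  rw [hnorm] at hmin
  linarith

lemma sum_pairs_le {L : Fin N → Fin N → ℝ} {Γ : Fin N → ℝ} (hN : 2 ≤ N)
    (hLpos : ∀ i j, 0 < L i j) (hLsym : ∀ i j, L i j = L j i)
    (hΓ : ∀ i, Γ i = (N : ℝ)⁻¹ * ∑ j, L i j) (hg : ∀ x, HasGradientAt f (g x) x)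
    (hlip : ∀ (i j : Fin N), i ≠ j → ∀ (y s : En n),
      (∀ l, blk l ≠ i → blk l ≠ j → s l = 0) →
      ‖(blockProj blk i (g (y + s)) + blockProj blk j (g (y + s))) -
        (blockProj blk i (g y) + blockProj blk j (g y))‖ ≤ L i j * ‖s‖)
    (hHconv : ∀ l, ConvexOn ℝ Set.univ (Hc l)) (hsep : ∀ x : En n, h x = ∑ l, Hc l (x l))
    {a x : En n} (D : Fin N → Fin N → En n)
    (hDsupp : ∀ i j, i ≠ j → ∀ l, blk l ≠ i → blk l ≠ j → D i j l = 0)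
    (hDmin : ∀ i j, i ≠ j → ∀ s : En n,
      (∀ l, blk l ≠ i → blk l ≠ j → s l = 0) → ⟪a, s⟫ = 0 →
      f x + ⟪g x, D i j⟫ + L i j / 2 * ‖D i j‖ ^ 2 + h (x + D i j) ≤
      f x + ⟪g x, s⟫ + L i j / 2 * ‖s‖ ^ 2 + h (x + s))
    {d : En n} (hd : ⟪a, d⟫ = 0) :
    ∑ p : {p : Fin N × Fin N // p.1 < p.2}, (f (x + D p.1.1 p.1.2) + h (x + D p.1.1 p.1.2)) ≤
      Fintype.card {p : Fin N × Fin N // p.1 < p.2} * (f x + h x) +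
        (∑ i, blockModelChange blk (g x) h x d i + N / 2 * blockNormSq blk Γ d) := by
  classical
  set A := blockModelChange blk (g x) h x d
  set nrm : Fin N → ℝ := fun i => ‖blockProj blk i d‖ ^ 2
  have hc : ∑ i, ⟪a, blockProj blk i d⟫ = 0 := by rw [← inner_eq_sum_inner_blockProj, hd]
  obtain ⟨τ, hτ0, hτdiag, hτrow, hτbal⟩ :=
    exists_balanced_stochastic_weights (by simpa using hN) _ hc
  have hτ1 : ∀ i j, τ i j ≤ 1 := fun i j =>
    hτrow i ▸ Finset.single_le_sum (fun k _ => hτ0 i k) (mem_univ j)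
  set B : Fin N → Fin N → ℝ := fun i j => τ i j * A i + L i j / 2 * (τ i j ^ 2 * nrm i)
  have hpair : ∀ p : {p : Fin N × Fin N // p.1 < p.2},
      f (x + D p.1.1 p.1.2) + h (x + D p.1.1 p.1.2) ≤
        (f x + h x) + (B p.1.1 p.1.2 + B p.1.2 p.1.1) := by
    rintro ⟨⟨i, j⟩, hij⟩
    have := add_le_of_pair_minimizer hg hlip hHconv hsep hij.ne (hDsupp i j hij.ne)
      (hDmin i j hij.ne) d (hτ0 i j) (hτ1 i j) (hτ0 j i) (hτ1 j i) (hτbal i j)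
    simp only [B, hLsym j i]
    linarith
  have hrow : ∀ i, ∑ j, B i j ≤ A i + N / 2 * (Γ i * nrm i) := by
    intro i
    have hL : ∑ j, L i j = N * Γ i := by
      rw [hΓ, ← mul_assoc, mul_inv_cancel₀ (by positivity), one_mul]
    calc ∑ j, B i j ≤ A i + (∑ j, L i j) / 2 * nrm i :=
          sum_mul_add_mul_sq_mul_le (hτ0 i) (hτrow i) (fun j => (hLpos i j).le) (by positivity)
      _ = A i + N / 2 * (Γ i * nrm i) := by rw [hL]; ring
  have hdiag : ∑ p ∈ univ.offDiag, B p.1 p.2 = ∑ i, ∑ j, B i j := by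
    rw [← Finset.sum_product', Finset.univ_product_univ]
    refine Finset.sum_subset (fun p _ => mem_univ p) fun p _ hp => ?_
    have : p.1 = p.2 := by simpa using hp
    simp [B, this, hτdiag]
  calc _ ≤ ∑ p : {p : Fin N × Fin N // p.1 < p.2},
          ((f x + h x) + (B p.1.1 p.1.2 + B p.1.2 p.1.1)) :=
        Finset.sum_le_sum fun p _ => hpair p
    _ = Fintype.card {p : Fin N × Fin N // p.1 < p.2} * (f x + h x) + ∑ i, ∑ j, B i j := by
        rw [Finset.sum_add_distrib, sum_lt_pairs_add_swap, hdiag, Finset.sum_const, card_univ,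
          nsmul_eq_mul]
    _ ≤ _ := by
        grw [Finset.sum_le_sum fun i _ => hrow i]
        rw [Finset.sum_add_distrib, ← Finset.mul_sum]
        rfl

lemma sum_blockModelChange_add_le_of_isMin (hHconv : ∀ l, ConvexOn ℝ Set.univ (Hc l))
    (hsep : ∀ x : En n, h x = ∑ l, Hc l (x l)) {Γ : Fin N → ℝ} {c β : ℝ} (hβ0 : 0 ≤ β)
    (hβ1 : β < 1) {a u x d : En n} (hd : ⟪a, d⟫ = 0)
    (hdmin : ∀ s : En n, ⟪a, s⟫ = 0 →
      ⟪u, d⟫ + c * blockNormSq blk Γ d + h (x + d) ≤ ⟪u, s⟫ + c * blockNormSq blk Γ s + h (x + s)) :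
    ∑ i, blockModelChange blk u h x d i + c * blockNormSq blk Γ d ≤
      -(c * β) * blockNormSq blk Γ d := by
  set S := ∑ i, blockModelChange blk u h x d i
  set B := blockNormSq blk Γ d
  have hS : S = ⟪u, d⟫ + (h (x + d) - h x) := sum_blockModelChange hsep u x d
  have hfeas : ⟪a, blockScale blk (fun _ => β) d⟫ = 0 := by
    rw [blockScale_const, inner_smul_right, hd, mul_zero]
  have hmodel := inner_blockScale_add_le (blk := blk) hHconv hsep u x d
    (θ := fun _ => β) (fun _ => hβ0) (fun _ => hβ1.le)
  rw [← Finset.mul_sum] at hmodel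
  have hB : blockNormSq blk Γ (blockScale blk (fun _ => β) d) = β ^ 2 * B := by
    rw [blockNormSq_blockScale]
    simp only [B, blockNormSq, Finset.mul_sum]
    exact Finset.sum_congr rfl fun i _ => by ring
  have hmin := hdmin _ hfeas
  rw [hB] at hmin
  have : (1 - β) * (S + c * (1 + β) * B) ≤ 0 := by linarith
  nlinarith [sub_pos.2 hβ1]

lemma expect_pairs_le {L : Fin N → Fin N → ℝ} {Γ : Fin N → ℝ} (hN : 2 ≤ N)
    (hLpos : ∀ i j, 0 < L i j) (hLsym : ∀ i j, L i j = L j i)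
    (hΓ : ∀ i, Γ i = (N : ℝ)⁻¹ * ∑ j, L i j) (hg : ∀ x, HasGradientAt f (g x) x)
    (hlip : ∀ (i j : Fin N), i ≠ j → ∀ (y s : En n),
      (∀ l, blk l ≠ i → blk l ≠ j → s l = 0) →
      ‖(blockProj blk i (g (y + s)) + blockProj blk j (g (y + s))) -
        (blockProj blk i (g y) + blockProj blk j (g y))‖ ≤ L i j * ‖s‖)
    (hHconv : ∀ l, ConvexOn ℝ Set.univ (Hc l)) (hsep : ∀ x : En n, h x = ∑ l, Hc l (x l))
    {a x : En n} (D : Fin N → Fin N → En n)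
    (hDsupp : ∀ i j, i ≠ j → ∀ l, blk l ≠ i → blk l ≠ j → D i j l = 0)
    (hDmin : ∀ i j, i ≠ j → ∀ s : En n,
      (∀ l, blk l ≠ i → blk l ≠ j → s l = 0) → ⟪a, s⟫ = 0 →
      f x + ⟪g x, D i j⟫ + L i j / 2 * ‖D i j‖ ^ 2 + h (x + D i j) ≤
      f x + ⟪g x, s⟫ + L i j / 2 * ‖s‖ ^ 2 + h (x + s))
    {d : En n} (hd : ⟪a, d⟫ = 0)
    (hdmin : ∀ s : En n, ⟪a, s⟫ = 0 →
      f x + ⟪g x, d⟫ + (N : ℝ) / 2 * blockNormSq blk Γ d + h (x + d) ≤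
      f x + ⟪g x, s⟫ + (N : ℝ) / 2 * blockNormSq blk Γ s + h (x + s)) :
    𝔼 p : {p : Fin N × Fin N // p.1 < p.2}, (f (x + D p.1.1 p.1.2) + h (x + D p.1.1 p.1.2)) ≤
      f x + h x - blockNormSq blk Γ d / N := by
  have hN' : (2 : ℝ) ≤ N := by exact_mod_cast hN
  set P : ℝ := (Fintype.card {p : Fin N × Fin N // p.1 < p.2} : ℝ)
  have hP : P * 2 = N * (N - 1) := by simpa using card_lt_pairs_mul_two (ι := Fin N)
  have hsum := sum_pairs_le hN hLpos hLsym hΓ hg hlip hHconv hsep D hDsupp hDmin hd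
  have hprox := sum_blockModelChange_add_le_of_isMin (blk := blk) (Γ := Γ) (c := N / 2)
    (β := (N - 1) / N) (u := g x) (x := x) hHconv hsep (div_nonneg (by linarith) (by positivity))
    (by rw [div_lt_one (by positivity)]; linarith) hd fun s hs => by linarith [hdmin s hs]
  have hcoef : (N / 2 * ((N - 1) / N) : ℝ) = P / N := by field_simp; linarith
  rw [hcoef] at hprox
  rw [Fintype.expect_eq_sum_div_card, div_le_iff₀ (by nlinarith)]
  have : (f x + h x - blockNormSq blk Γ d / N) * P =
      P * (f x + h x) + -(P / N) * blockNormSq blk Γ d := by ring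
  linarith

end StepBound

theorem stmt14_general {n N : ℕ} (hN : 2 ≤ N) (blk : Fin n → Fin N)
    (L : Fin N → Fin N → ℝ) (hLpos : ∀ i j, 0 < L i j) (hLsym : ∀ i j, L i j = L j i)
    (f h : En n → ℝ) (g : En n → En n) (hg : ∀ x, HasGradientAt f (g x) x)
    (hlip : ∀ (i j : Fin N), i ≠ j → ∀ (y s : En n),
      (∀ l, blk l ≠ i → blk l ≠ j → s l = 0) →
      ‖(blockProj blk i (g (y + s)) + blockProj blk j (g (y + s))) -
        (blockProj blk i (g y) + blockProj blk j (g y))‖ ≤ L i j * ‖s‖)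
    (Hc : Fin n → ℝ → ℝ) (hHconv : ∀ l, ConvexOn ℝ Set.univ (Hc l))
    (hsep : ∀ x : En n, h x = ∑ l, Hc l (x l))
    (a : En n) (b : ℝ)
    (F : En n → ℝ) (hF : ∀ x, F x = f x + h x)
    (Fstar : ℝ) (hFstar : IsGLB (F '' {x : En n | ⟪a, x⟫ = b}) Fstar)
    (Γ : Fin N → ℝ) (hΓ : ∀ i, Γ i = (N : ℝ)⁻¹ * ∑ j, L i j)
    -- the 2-block coordinate descent directions at each point
    (D : En n → Fin N → Fin N → En n)
    (hDsupp : ∀ x i j, i ≠ j → ∀ l, blk l ≠ i → blk l ≠ j → D x i j l = 0)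
    (hDfeas : ∀ x i j, ⟪a, D x i j⟫ = 0)
    (hDmin : ∀ (x : En n) (i j : Fin N), i ≠ j → ∀ s : En n,
      (∀ l, blk l ≠ i → blk l ≠ j → s l = 0) → ⟪a, s⟫ = 0 →
      f x + ⟪g x, D x i j⟫ + L i j / 2 * ‖D x i j‖ ^ 2 + h (x + D x i j) ≤
      f x + ⟪g x, s⟫ + L i j / 2 * ‖s‖ ^ 2 + h (x + s))
    -- the constrained proximal map `d_{NΓ}`
    (dN : En n → En n) (hdNfeas : ∀ x, ⟪a, dN x⟫ = 0)
    (hdNmin : ∀ (x : En n) (s : En n), ⟪a, s⟫ = 0 →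
      f x + ⟪g x, dN x⟫ + (N : ℝ) / 2 * blockNormSq blk Γ (dN x) + h (x + dN x) ≤
      f x + ⟪g x, s⟫ + (N : ℝ) / 2 * blockNormSq blk Γ s + h (x + s))
    -- the trajectories along each realization of the random pairs
    (x0 : En n) (hx0 : ⟪a, x0⟫ = b)
    (X : (k : ℕ) → (Fin k → {p : Fin N × Fin N // p.1 < p.2}) → En n)
    (hX0 : ∀ w, X 0 w = x0)
    (hXs : ∀ k (w : Fin (k + 1) → {p : Fin N × Fin N // p.1 < p.2}),
      X (k + 1) w = X k (fun t => w t.castSucc) +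
        D (X k (fun t => w t.castSucc)) (w (Fin.last k)).1.1 (w (Fin.last k)).1.2)
    (k : ℕ) :
    ∃ l ≤ k,
      ((Fintype.card {p : Fin N × Fin N // p.1 < p.2} : ℝ) ^ l)⁻¹ *
          (∑ w : Fin l → {p : Fin N × Fin N // p.1 < p.2},
            blockNormSq blk Γ (dN (X l w))) ≤
        N * (F x0 - Fstar) / (k + 1) := by
  have hfeas : ∀ l w, ⟪a, X l w⟫ = b := by
    intro l
    induction l with
    | zero => intro w; rw [hX0, hx0]
    | succ l ih => intro w; rw [hXs, inner_add_right, ih, hDfeas, add_zero]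
  have hN' : (0 : ℝ) < N := by positivity
  have hstep : ∀ x, blockNormSq blk Γ (dN x) ≤
      N * (F x - 𝔼 p : {p : Fin N × Fin N // p.1 < p.2}, F (x + D x p.1.1 p.1.2)) := by
    intro x
    have hexp := expect_pairs_le hN hLpos hLsym hΓ hg hlip hHconv hsep (D x) (hDsupp x)
      (hDmin x) (hdNfeas x) (hdNmin x)
    have hscaled := mul_le_mul_of_nonneg_left hexp hN'.le
    rw [mul_sub, mul_div_cancel₀ _ hN'.ne'] at hscaled
    simp only [hF]
    linarith
  have : Nonempty {p : Fin N × Fin N // p.1 < p.2} :=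
    ⟨⟨(⟨0, by omega⟩, ⟨1, by omega⟩), by simp [Fin.lt_def]⟩⟩
  obtain ⟨l, hlk, hl⟩ := exists_expect_le_of_expect_step_le X (fun x p => x + D x p.1.1 p.1.2) hXs
    F (fun x => blockNormSq blk Γ (dN x)) hN'.le (fun l w => hFstar.1 ⟨X l w, hfeas l w, rfl⟩)
    hstep k
  refine ⟨l, hlk, ?_⟩
  simp only [hX0, Fintype.expect_const] at hl
  rwa [Fintype.expect_eq_sum_div_card, Fintype.card_fun, Fintype.card_fin, div_eq_inv_mul,
    Nat.cast_pow] at hl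

/-- Convergence rate of the 2-random coordinate descent method with
uniform pair selection on `min {f(x) + h(x) : aᵀx = b}`.  The random iterates are encoded
by their values `X k w` along every realization `w` of the first `k` i.i.d. uniform
unordered block pairs, so that `E[(M₂(x^l, Γ))²]` is the normalized sum below, where
`M₂(x, Γ) = ‖d_{NΓ}(x)‖_Γ`.  Then
`min_{0 ≤ l ≤ k} E[(M₂(x^l, Γ))²] ≤ N (F(x⁰) − F*)/(k+1)` where `F*` is the optimal
value of the constrained problem. -/
theorem stmt14 {n N : ℕ} (hN : 2 ≤ N) (blk : Fin n → Fin N)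
    (L : Fin N → Fin N → ℝ) (hLpos : ∀ i j, 0 < L i j) (hLsym : ∀ i j, L i j = L j i)
    (f h : En n → ℝ) (g : En n → En n) (hg : ∀ x, HasGradientAt f (g x) x)
    (hlip : ∀ (i j : Fin N), i ≠ j → ∀ (y s : En n),
      (∀ l, blk l ≠ i → blk l ≠ j → s l = 0) →
      ‖(blockProj blk i (g (y + s)) + blockProj blk j (g (y + s))) -
        (blockProj blk i (g y) + blockProj blk j (g y))‖ ≤ L i j * ‖s‖)
    (Hc : Fin n → ℝ → ℝ) (hHconv : ∀ l, ConvexOn ℝ Set.univ (Hc l))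
    (hsep : ∀ x : En n, h x = ∑ l, Hc l (x l)) (hcont : Continuous h)
    (a : En n) (ha : a ≠ 0) (b : ℝ)
    (F : En n → ℝ) (hF : ∀ x, F x = f x + h x)
    (Fstar : ℝ) (hFstar : IsGLB (F '' {x : En n | ⟪a, x⟫ = b}) Fstar)
    (Γ : Fin N → ℝ) (hΓ : ∀ i, Γ i = (N : ℝ)⁻¹ * ∑ j, L i j)
    -- the 2-block coordinate descent directions at each point
    (D : En n → Fin N → Fin N → En n)
    (hDsupp : ∀ x i j, i ≠ j → ∀ l, blk l ≠ i → blk l ≠ j → D x i j l = 0)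
    (hDfeas : ∀ x i j, ⟪a, D x i j⟫ = 0)
    (hDmin : ∀ (x : En n) (i j : Fin N), i ≠ j → ∀ s : En n,
      (∀ l, blk l ≠ i → blk l ≠ j → s l = 0) → ⟪a, s⟫ = 0 →
      f x + ⟪g x, D x i j⟫ + L i j / 2 * ‖D x i j‖ ^ 2 + h (x + D x i j) ≤
      f x + ⟪g x, s⟫ + L i j / 2 * ‖s‖ ^ 2 + h (x + s))
    -- the constrained proximal map `d_{NΓ}`
    (dN : En n → En n) (hdNfeas : ∀ x, ⟪a, dN x⟫ = 0)
    (hdNmin : ∀ (x : En n) (s : En n), ⟪a, s⟫ = 0 →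
      f x + ⟪g x, dN x⟫ + (N : ℝ) / 2 * blockNormSq blk Γ (dN x) + h (x + dN x) ≤
      f x + ⟪g x, s⟫ + (N : ℝ) / 2 * blockNormSq blk Γ s + h (x + s))
    -- the trajectories along each realization of the random pairs
    (x0 : En n) (hx0 : ⟪a, x0⟫ = b)
    (X : (k : ℕ) → (Fin k → {p : Fin N × Fin N // p.1 < p.2}) → En n)
    (hX0 : ∀ w, X 0 w = x0)
    (hXs : ∀ k (w : Fin (k + 1) → {p : Fin N × Fin N // p.1 < p.2}),
      X (k + 1) w = X k (fun t => w t.castSucc) +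
        D (X k (fun t => w t.castSucc)) (w (Fin.last k)).1.1 (w (Fin.last k)).1.2)
    (k : ℕ) :
    ∃ l ≤ k,
      ((Fintype.card {p : Fin N × Fin N // p.1 < p.2} : ℝ) ^ l)⁻¹ *
          (∑ w : Fin l → {p : Fin N × Fin N // p.1 < p.2},
            blockNormSq blk Γ (dN (X l w))) ≤
        N * (F x0 - Fstar) / (k + 1) :=
  stmt14_general hN blk L hLpos hLsym f h g hg hlip Hc hHconv hsep a b F hF Fstar hFstar Γ hΓ D
    hDsupp hDfeas hDmin dN hdNfeas hdNmin x0 hx0 X hX0 hXs k
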